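/- arXiv:0704.1466 — 4 statements merged into one kernel-verified Lean document; each statement's English description precedes it below -/
import Mathlib

section
/- Let θ̂_n be any sequence of estimators in the Gaussian location model (sample of size n from N(θ,1), θ ∈ ℝ) such that P_{n,θ}(θ̂_n = 0) → 1 whenever θ = 0. Then for every s ∈ ℝ, the risk E_{n,θ_n}[n(θ̂_n − θ_n)²] evaluated at the local parameter θ_n = −s/√n satisfies liminf_{n→∞} E_{n,θ_n}[n(θ̂_n − θ_n)²] ≥ s². -/
/-!
Under `P_{n,0}` the likelihood ratio `dP_{n,θ}/dP_{n,0}` has second moment `exp (n θ²)`,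
so by Cauchy–Schwarz `P_{n,θ}(B) ≤ P_{n,0}(B)^{1/2} exp (n θ² / 2)`. Along `θ_n = -s/√n`
the factor stays `exp (s² / 2)`, so events that are negligible under `P_{n,0}` stay
negligible under `P_{n,θ_n}` (contiguity). Hence `θ̂_n = 0` with `P_{n,θ_n}`-probability
tending to one, and on that event the loss `n (θ̂_n - θ_n)²` equals `s²`.
-/

open MeasureTheory ProbabilityTheory Filter Topology

/-- Joint law of a sample of size `n` of i.i.d. `N(θ,1)` observations. -/
noncomputable def gaussP (n : ℕ) (θ : ℝ) : Measure (Fin n → ℝ) :=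
  Measure.pi fun _ => gaussianReal θ 1

open scoped ENNReal

section ProductMeasure

variable {ι : Type*} [Fintype ι] {X : ι → Type*} [∀ i, MeasurableSpace (X i)]
  {μ : (i : ι) → Measure (X i)} {f : (i : ι) → X i → ℝ≥0∞}

theorem lintegral_fintype_prod_eq_prod [∀ i, IsProbabilityMeasure (μ i)]
    (hf : ∀ i, Measurable (f i)) :
    ∫⁻ x, ∏ i, f i (x i) ∂Measure.pi μ = ∏ i, ∫⁻ t, f i t ∂μ i := by
  rw [lintegral_prod_eq_prod_lintegral_of_indepFun _ _
    (iIndepFun_pi fun i => (hf i).aemeasurable) fun i => (hf i).comp (measurable_pi_apply i)]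
  exact Finset.prod_congr rfl fun i _ => (measurePreserving_eval μ i).lintegral_comp (hf i)

theorem MeasureTheory.Measure.pi_withDensity [∀ i, IsProbabilityMeasure (μ i)]
    [∀ i, SigmaFinite ((μ i).withDensity (f i))] (hf : ∀ i, Measurable (f i)) :
    Measure.pi (fun i => (μ i).withDensity (f i))
      = (Measure.pi μ).withDensity fun x => ∏ i, f i (x i) := by
  refine Measure.pi_eq fun s hs => ?_
  have hbox : (Set.univ.pi s).indicator (fun x => ∏ i, f i (x i))
      = fun x => ∏ i, (s i).indicator (f i) (x i) := by
    ext x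
    by_cases hx : x ∈ Set.univ.pi s
    · rw [Set.indicator_of_mem hx]
      exact Finset.prod_congr rfl fun i _ => (Set.indicator_of_mem (hx i trivial) _).symm
    · rw [Set.indicator_of_notMem hx]
      obtain ⟨i, hi⟩ := by simpa only [Set.mem_univ_pi, not_forall] using hx
      exact (Finset.prod_eq_zero (Finset.mem_univ i) (Set.indicator_of_notMem hi _)).symm
  rw [withDensity_apply _ (.univ_pi hs), ← lintegral_indicator (.univ_pi hs), hbox,
    lintegral_fintype_prod_eq_prod fun i => (hf i).indicator (hs i)]
  exact Finset.prod_congr rfl fun i _ => by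
    rw [lintegral_indicator (hs i), withDensity_apply _ (hs i)]

end ProductMeasure

theorem withDensity_apply_le_rpow_mul_rpow {α : Type*} [MeasurableSpace α] (μ : Measure α)
    {f : α → ℝ≥0∞} (hf : AEMeasurable f μ) {s : Set α} (hs : MeasurableSet s) :
    μ.withDensity f s ≤ μ s ^ (1 / 2 : ℝ) * (∫⁻ x, f x ^ 2 ∂μ) ^ (1 / 2 : ℝ) := by
  have hCS := ENNReal.lintegral_mul_le_Lp_mul_Lq (μ.restrict s) Real.HolderConjugate.two_two
    (f := 1) aemeasurable_const hf.restrict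
  simp only [ENNReal.rpow_two, Pi.one_apply, one_pow, lintegral_one,
    Measure.restrict_apply_univ, Pi.mul_apply, one_mul] at hCS
  rw [withDensity_apply _ hs]
  exact hCS.trans (by gcongr; exact Measure.restrict_le_self)

noncomputable def gaussianLikelihoodRatio (θ x : ℝ) : ℝ≥0∞ :=
  ENNReal.ofReal (Real.exp (θ * x - θ ^ 2 / 2))

theorem measurable_gaussianLikelihoodRatio (θ : ℝ) :
    Measurable (gaussianLikelihoodRatio θ) := by
  unfold gaussianLikelihoodRatio
  fun_prop

theorem gaussianLikelihoodRatio_sq (θ x : ℝ) :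
    gaussianLikelihoodRatio θ x ^ 2
      = ENNReal.ofReal (Real.exp (θ ^ 2)) * gaussianLikelihoodRatio (2 * θ) x := by
  simp only [gaussianLikelihoodRatio, ← ENNReal.ofReal_pow (Real.exp_nonneg _),
    ← ENNReal.ofReal_mul (Real.exp_nonneg _), ← Real.exp_nat_mul, ← Real.exp_add]
  ring_nf

theorem gaussianReal_eq_withDensity (θ : ℝ) :
    gaussianReal θ 1 = (gaussianReal 0 1).withDensity (gaussianLikelihoodRatio θ) := by
  rw [gaussianReal_of_var_ne_zero 0 one_ne_zero, gaussianReal_of_var_ne_zero θ one_ne_zero,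
    ← withDensity_mul _ (measurable_gaussianPDF 0 1) (measurable_gaussianLikelihoodRatio θ)]
  congr 1
  funext x
  simp only [Pi.mul_apply, gaussianPDF, gaussianLikelihoodRatio,
    ← ENNReal.ofReal_mul (gaussianPDFReal_nonneg 0 1 x)]
  congr 1
  simp only [gaussianPDFReal, NNReal.coe_one, mul_assoc, ← Real.exp_add]
  ring_nf

theorem lintegral_gaussianLikelihoodRatio (θ : ℝ) :
    ∫⁻ x, gaussianLikelihoodRatio θ x ∂gaussianReal 0 1 = 1 := by
  rw [← setLIntegral_univ, ← withDensity_apply _ .univ, ← gaussianReal_eq_withDensity,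
    measure_univ]

theorem lintegral_gaussianLikelihoodRatio_sq (θ : ℝ) :
    ∫⁻ x, gaussianLikelihoodRatio θ x ^ 2 ∂gaussianReal 0 1
      = ENNReal.ofReal (Real.exp (θ ^ 2)) := by
  simp only [gaussianLikelihoodRatio_sq]
  rw [lintegral_const_mul _ (measurable_gaussianLikelihoodRatio _),
    lintegral_gaussianLikelihoodRatio, mul_one]

instance (n : ℕ) (θ : ℝ) : IsProbabilityMeasure (gaussP n θ) := by
  unfold gaussP
  infer_instance

theorem gaussP_eq_withDensity (n : ℕ) (θ : ℝ) :
    gaussP n θ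
      = (gaussP n 0).withDensity fun y => ∏ i, gaussianLikelihoodRatio θ (y i) := by
  have : SigmaFinite ((gaussianReal 0 1).withDensity (gaussianLikelihoodRatio θ)) :=
    SigmaFinite.withDensity_ofReal _
  simp only [gaussP, gaussianReal_eq_withDensity θ]
  exact Measure.pi_withDensity fun _ => measurable_gaussianLikelihoodRatio θ

theorem lintegral_prod_gaussianLikelihoodRatio_sq (n : ℕ) (θ : ℝ) :
    ∫⁻ y, (∏ i, gaussianLikelihoodRatio θ (y i)) ^ 2 ∂gaussP n 0
      = ENNReal.ofReal (Real.exp (n * θ ^ 2)) := by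
  simp only [← Finset.prod_pow]
  rw [gaussP, lintegral_fintype_prod_eq_prod fun _ =>
    (measurable_gaussianLikelihoodRatio θ).pow_const 2]
  simp only [lintegral_gaussianLikelihoodRatio_sq, Finset.prod_const, Finset.card_univ,
    Fintype.card_fin, ← ENNReal.ofReal_pow (Real.exp_nonneg _), ← Real.exp_nat_mul]

theorem gaussP_apply_le (n : ℕ) (θ : ℝ) {s : Set (Fin n → ℝ)} (hs : MeasurableSet s) :
    gaussP n θ s
      ≤ gaussP n 0 s ^ (1 / 2 : ℝ)
        * ENNReal.ofReal (Real.exp (n * θ ^ 2)) ^ (1 / 2 : ℝ) := by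
  rw [← lintegral_prod_gaussianLikelihoodRatio_sq, gaussP_eq_withDensity n θ]
  exact withDensity_apply_le_rpow_mul_rpow _
    (Finset.measurable_prod _ fun i _ => (measurable_gaussianLikelihoodRatio θ).comp
      (measurable_pi_apply i)).aemeasurable hs

theorem tendsto_measure_compl_nhds_zero_iff {ι : Type*} {X : ι → Type*}
    [∀ i, MeasurableSpace (X i)] {μ : (i : ι) → Measure (X i)}
    [∀ i, IsProbabilityMeasure (μ i)]
    {A : (i : ι) → Set (X i)} (hA : ∀ i, MeasurableSet (A i)) {l : Filter ι} :
    Tendsto (fun i => μ i (A i)ᶜ) l (𝓝 0) ↔ Tendsto (fun i => μ i (A i)) l (𝓝 1) := by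
  have hcompl : ∀ i, μ i (A i)ᶜ = 1 - μ i (A i) := fun i => prob_compl_eq_one_sub (hA i)
  have hself : ∀ i, μ i (A i) = 1 - μ i (A i)ᶜ := fun i => by
    rw [hcompl, ENNReal.sub_sub_cancel ENNReal.one_ne_top prob_le_one]
  constructor
  · intro h
    have := ENNReal.Tendsto.sub tendsto_const_nhds h (Or.inl ENNReal.one_ne_top)
    rw [tsub_zero] at this
    exact this.congr fun i => (hself i).symm
  · intro h
    have := ENNReal.Tendsto.sub tendsto_const_nhds h (Or.inl ENNReal.one_ne_top)
    rw [tsub_self] at this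
    exact this.congr fun i => (hcompl i).symm

section Contiguity

variable {θ : ℕ → ℝ} {C : ℝ}

theorem tendsto_gaussP_apply_nhds_zero (hθ : ∀ᶠ n : ℕ in atTop, (n : ℝ) * θ n ^ 2 ≤ C)
    {B : (n : ℕ) → Set (Fin n → ℝ)} (hB : ∀ n, MeasurableSet (B n))
    (h0 : Tendsto (fun n => gaussP n 0 (B n)) atTop (𝓝 0)) :
    Tendsto (fun n => gaussP n (θ n) (B n)) atTop (𝓝 0) := by
  have hbound : Tendsto (fun n => gaussP n 0 (B n) ^ (1 / 2 : ℝ)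
      * ENNReal.ofReal (Real.exp C) ^ (1 / 2 : ℝ)) atTop (𝓝 0) := by
    have hsqrt := ((ENNReal.continuous_rpow_const (y := 1 / 2)).tendsto 0).comp h0
    simpa [ENNReal.zero_rpow_of_pos] using ENNReal.Tendsto.mul_const hsqrt
      (Or.inr (ENNReal.rpow_ne_top_of_nonneg (by norm_num) ENNReal.ofReal_ne_top))
  refine tendsto_of_tendsto_of_tendsto_of_le_of_le' tendsto_const_nhds hbound
    (.of_forall fun _ => zero_le) ?_
  filter_upwards [hθ] with n hn
  exact (gaussP_apply_le n (θ n) (hB n)).trans (by gcongr)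

theorem tendsto_gaussP_apply_nhds_one (hθ : ∀ᶠ n : ℕ in atTop, (n : ℝ) * θ n ^ 2 ≤ C)
    {A : (n : ℕ) → Set (Fin n → ℝ)} (hA : ∀ n, MeasurableSet (A n))
    (h1 : Tendsto (fun n => gaussP n 0 (A n)) atTop (𝓝 1)) :
    Tendsto (fun n => gaussP n (θ n) (A n)) atTop (𝓝 1) := by
  rw [← tendsto_measure_compl_nhds_zero_iff (μ := fun n => gaussP n 0) hA] at h1
  rw [← tendsto_measure_compl_nhds_zero_iff (μ := fun n => gaussP n (θ n)) hA]
  exact tendsto_gaussP_apply_nhds_zero hθ (fun n => (hA n).compl) h1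

end Contiguity

theorem mul_div_sqrt_sq {x : ℝ} (hx : 0 < x) (a : ℝ) : x * (a / √x) ^ 2 = a ^ 2 := by
  rw [div_pow, Real.sq_sqrt hx.le]
  field_simp

theorem stmt_0
    (est : (n : ℕ) → (Fin n → ℝ) → ℝ)
    (hmeas : ∀ n, Measurable (est n))
    (hsparse : Tendsto (fun n => gaussP n 0 {y | est n y = 0}) atTop (𝓝 1))
    (s : ℝ) :
    ENNReal.ofReal (s ^ 2) ≤
      Filter.liminf (fun n : ℕ =>
        ∫⁻ y, ENNReal.ofReal ((n : ℝ) * (est n y - (-s / Real.sqrt n)) ^ 2)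
          ∂(gaussP n (-s / Real.sqrt n))) atTop := by
  set A : (n : ℕ) → Set (Fin n → ℝ) := fun n => {y | est n y = 0}
  have hA : ∀ n, MeasurableSet (A n) := fun n => hmeas n (measurableSet_singleton 0)
  have hscale : ∀ᶠ n : ℕ in atTop, (n : ℝ) * (-s / √n) ^ 2 = s ^ 2 := by
    filter_upwards [eventually_gt_atTop 0] with n hn
    rw [mul_div_sqrt_sq (Nat.cast_pos.mpr hn), neg_sq]
  have hlocal := tendsto_gaussP_apply_nhds_one (hscale.mono fun _ h => h.le) hA hsparse
  have hrisk : ∀ᶠ n : ℕ in atTop, ENNReal.ofReal (s ^ 2) * gaussP n (-s / √n) (A n)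
      ≤ ∫⁻ y, ENNReal.ofReal ((n : ℝ) * (est n y - (-s / √n)) ^ 2)
          ∂gaussP n (-s / √n) := by
    filter_upwards [hscale] with n hn
    calc ENNReal.ofReal (s ^ 2) * gaussP n (-s / √n) (A n)
        = ∫⁻ _ in A n, ENNReal.ofReal (s ^ 2) ∂gaussP n (-s / √n) :=
          (setLIntegral_const _ _).symm
      _ = ∫⁻ y in A n, ENNReal.ofReal ((n : ℝ) * (est n y - (-s / √n)) ^ 2)
            ∂gaussP n (-s / √n) :=
          setLIntegral_congr_fun (hA n) fun y (hy : est n y = 0) => by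
            rw [hy, zero_sub, neg_sq, hn]
      _ ≤ _ := setLIntegral_le_lintegral _ _
  calc ENNReal.ofReal (s ^ 2)
      = liminf (fun n => ENNReal.ofReal (s ^ 2) * gaussP n (-s / √n) (A n)) atTop := by
        simpa using (ENNReal.Tendsto.const_mul hlocal (Or.inl one_ne_zero)).liminf_eq.symm
    _ ≤ _ := liminf_le_liminf hrisk
end

section
/- The maximal scaled mean squared error of Hodges' estimator diverges: sup_{θ∈ℝ} E_{n,θ}[n(θ̂_n − θ)²] → ∞ as n → ∞, where θ̂_n = ȳ_n·1{|ȳ_n| > n^{−1/4}}. -/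
open MeasureTheory ProbabilityTheory Filter Topology

/-- The sample mean of `n` observations. -/
noncomputable def sampleMean (n : ℕ) (y : Fin n → ℝ) : ℝ := (∑ t, y t) / n

/-- Hodges' estimator: the sample mean thresholded at `n^(-1/4)`. -/
noncomputable def hodges (n : ℕ) (y : Fin n → ℝ) : ℝ :=
  if (n : ℝ) ^ (-(1/4 : ℝ)) < |sampleMean n y| then sampleMean n y else 0

/-!
Take `θ = c / 2` with `c = n^(-1/4)`. The sample mean has mean `θ` and variance `1/n`, so by
Chebyshev it lies within `c / 2` of `θ`, hence in `[-c, c]` where the estimator vanishes, with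
probability at least `1 - 4/√n`. On that event the scaled loss is `n θ² = √n / 4`, so the risk at
`θ` is at least `√n / 4 - 1`.
-/

instance inst_s7 (n : ℕ) (θ : ℝ) : IsProbabilityMeasure (gaussP n θ) := by
  unfold gaussP; infer_instance

lemma measurable_sampleMean (n : ℕ) : Measurable (sampleMean n) := by
  unfold sampleMean; fun_prop

lemma sampleMean_eq_smul_sum (n : ℕ) :
    sampleMean n = (n : ℝ)⁻¹ • ∑ i : Fin n, fun y : Fin n → ℝ => y i := by
  ext y; simp only [sampleMean, div_eq_inv_mul, Pi.smul_apply, Finset.sum_apply, smul_eq_mul]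

section IIDSample

variable {μ : Measure ℝ} [IsProbabilityMeasure μ] {n : ℕ}

lemma integral_pi_eval (i : Fin n) : ∫ y, y i ∂Measure.pi (fun _ => μ) = ∫ x, x ∂μ := by
  have h := integral_map (μ := Measure.pi fun _ : Fin n => μ) (measurable_pi_apply i).aemeasurable
    (aestronglyMeasurable_id (α := ℝ))
  rw [(measurePreserving_eval _ i).map_eq] at h
  exact h.symm

lemma memLp_sampleMean (n : ℕ) {p : ENNReal} (hμ : MemLp id p μ) :
    MemLp (sampleMean n) p (Measure.pi fun _ => μ) := by
  rw [sampleMean_eq_smul_sum]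
  exact (memLp_finsetSum' Finset.univ fun i _ =>
    hμ.comp_measurePreserving (measurePreserving_eval _ i)).const_smul _

lemma integral_sampleMean (hn : n ≠ 0) (hμ : Integrable id μ) :
    ∫ y, sampleMean n y ∂Measure.pi (fun _ => μ) = ∫ x, x ∂μ := by
  simp only [sampleMean, integral_div]
  have h_eval (i : Fin n) : Integrable (fun y : Fin n → ℝ => y i) (Measure.pi fun _ => μ) :=
    (measurePreserving_eval (fun _ => μ) i).integrable_comp_of_integrable (g := id) hμ
  rw [integral_finsetSum _ fun i _ => h_eval i]
  simp only [integral_pi_eval, Finset.sum_const, Finset.card_univ, Fintype.card_fin, nsmul_eq_mul]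
  field_simp

lemma variance_sampleMean (n : ℕ) (hμ : MemLp id 2 μ) :
    Var[sampleMean n; Measure.pi fun _ => μ] = Var[id; μ] / n := by
  have := variance_sum_pi (μ := fun _ : Fin n => μ) (X := fun _ => id) fun _ => hμ
  rw [sampleMean_eq_smul_sum, variance_smul]
  simp only [id] at this
  rw [this]
  simp only [Finset.sum_const, Finset.card_univ, Fintype.card_fin, nsmul_eq_mul]
  rcases eq_or_ne n 0 with rfl | hn
  · simp
  · field_simp

lemma measure_le_abs_sampleMean_sub (hn : n ≠ 0) (hμ : MemLp id 2 μ) {ε : ℝ} (hε : 0 < ε) :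
    Measure.pi (fun _ => μ) {y | ε ≤ |sampleMean n y - ∫ x, x ∂μ|} ≤
      ENNReal.ofReal (Var[id; μ] / (n * ε ^ 2)) := by
  have := meas_ge_le_variance_div_sq (memLp_sampleMean n hμ) hε
  rwa [integral_sampleMean hn (hμ.integrable one_le_two), variance_sampleMean n hμ, div_div]
    at this

end IIDSample

lemma one_sub_le_measureReal_abs_sampleMean_sub_lt {n : ℕ} (hn : n ≠ 0) (θ : ℝ) {ε : ℝ}
    (hε : 0 < ε) :
    1 - 1 / (n * ε ^ 2) ≤ (gaussP n θ).real {y | |sampleMean n y - θ| < ε} := by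
  have hmeas : MeasurableSet {y | ε ≤ |sampleMean n y - θ|} :=
    measurableSet_le measurable_const ((measurable_sampleMean n).sub_const θ).abs
  have hcompl : {y | |sampleMean n y - θ| < ε} = {y | ε ≤ |sampleMean n y - θ|}ᶜ := by
    ext y; simp
  rw [hcompl, measureReal_compl hmeas, probReal_univ]
  gcongr
  have h := measure_le_abs_sampleMean_sub hn (memLp_id_gaussianReal (μ := θ) (v := 1) 2) hε
  rw [integral_id_gaussianReal, variance_id_gaussianReal] at h
  exact ENNReal.toReal_le_of_le_ofReal (by positivity) (by simpa [gaussP] using h)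

lemma hodges_eq_zero_of_abs_le {n : ℕ} {y : Fin n → ℝ}
    (h : |sampleMean n y| ≤ (n : ℝ) ^ (-(1/4 : ℝ))) : hodges n y = 0 :=
  if_neg h.not_gt

lemma ofReal_le_lintegral_hodges_risk {n : ℕ} (hn : n ≠ 0) {θ ε : ℝ} (hε : 0 < ε)
    (hθ : |θ| + ε ≤ (n : ℝ) ^ (-(1/4 : ℝ))) :
    ENNReal.ofReal (n * θ ^ 2 * (1 - 1 / (n * ε ^ 2))) ≤
      ∫⁻ y, ENNReal.ofReal (n * (hodges n y - θ) ^ 2) ∂gaussP n θ := by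
  set A := {y | |sampleMean n y - θ| < ε}
  have hA : MeasurableSet A :=
    measurableSet_lt ((measurable_sampleMean n).sub_const θ).abs measurable_const
  have hzero : ∀ y ∈ A, hodges n y = 0 := fun y hy => hodges_eq_zero_of_abs_le <| by
    have := abs_sub_abs_le_abs_sub (sampleMean n y) θ
    replace hy : |sampleMean n y - θ| < ε := hy
    linarith
  calc ENNReal.ofReal (n * θ ^ 2 * (1 - 1 / (n * ε ^ 2)))
      ≤ ENNReal.ofReal (n * θ ^ 2 * (gaussP n θ).real A) := by
        gcongr
        exact one_sub_le_measureReal_abs_sampleMean_sub_lt hn θ hε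
    _ = ∫⁻ _ in A, ENNReal.ofReal (n * θ ^ 2) ∂gaussP n θ := by
        rw [setLIntegral_const, ENNReal.ofReal_mul (by positivity), ofReal_measureReal]
    _ = ∫⁻ y in A, ENNReal.ofReal (n * (hodges n y - θ) ^ 2) ∂gaussP n θ := by
        refine setLIntegral_congr_fun hA fun y hy => ?_
        rw [hzero y hy, zero_sub, neg_sq]
    _ ≤ ∫⁻ y, ENNReal.ofReal (n * (hodges n y - θ) ^ 2) ∂gaussP n θ :=
        setLIntegral_le_lintegral _ _

lemma mul_rpow_neg_one_fourth_sq_eq_sqrt {x : ℝ} (hx : 0 ≤ x) : x * (x ^ (-(1/4 : ℝ))) ^ 2 = √x := by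
  rw [← Real.rpow_natCast, ← Real.rpow_mul hx, Real.sqrt_eq_rpow]
  rcases hx.eq_or_lt with rfl | hx
  · simp
  · rw [← Real.rpow_one_add' hx.le (by norm_num)]; norm_num

theorem stmt_7 :
    Tendsto (fun n : ℕ => ⨆ θ : ℝ,
        ∫⁻ y, ENNReal.ofReal ((n : ℝ) * (hodges n y - θ) ^ 2) ∂(gaussP n θ))
      atTop (𝓝 ⊤) := by
  have h_lower : Tendsto (fun n : ℕ => ENNReal.ofReal (√n / 4 - 1)) atTop (𝓝 ⊤) :=
    ENNReal.tendsto_ofReal_atTop.comp <| tendsto_atTop_add_const_right _ _ <|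
      (Real.tendsto_sqrt_atTop.comp tendsto_natCast_atTop_atTop).atTop_div_const (by norm_num)
  refine tendsto_nhds_top_mono h_lower ?_
  filter_upwards [eventually_ne_atTop 0] with n hn
  set c : ℝ := (n : ℝ) ^ (-(1/4 : ℝ))
  have hc : 0 < c := Real.rpow_pos_of_pos (by positivity) _
  have h_loss : (n : ℝ) * (c / 2) ^ 2 = √n / 4 := by
    rw [div_pow, ← mul_div_assoc, mul_rpow_neg_one_fourth_sq_eq_sqrt n.cast_nonneg]; norm_num
  have h_risk := ofReal_le_lintegral_hodges_risk hn (θ := c / 2) (ε := c / 2) (half_pos hc)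
    (by rw [abs_of_pos (half_pos hc)]; linarith)
  have h_sqrt : 0 < √(n : ℝ) / 4 := by have := Nat.pos_of_ne_zero hn; positivity
  rw [h_loss, mul_sub, mul_one, mul_one_div_cancel h_sqrt.ne'] at h_risk
  exact le_iSup_of_le (c / 2) h_risk
end

section
/- In the k-dimensional Gaussian shift experiment, if θ̂_n satisfies the componentwise sparsity condition P_{n,θ}(r(θ̂_n) ≤ r(θ)) → 1 for every θ ∈ ℝ^k (where r(θ)_i = 0 if θ_i = 0 and 1 otherwise), then for every nonzero c ∈ ℝ^k the maximal scaled mean squared error of the linear contrast satisfies sup_{θ∈ℝ^k} E_{n,θ}[n(c'θ̂_n − c'θ)²] → ∞. -/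
/-!
Sparsity at `θ = 0` forces `θ̂_n = 0` with `P_{n,0}`-probability tending to one. Rescaling by `√n`
identifies `P_{n,h/√n}` with the fixed law `N(h, I)`, and `N(h, I) ≪ N(0, I)`; hence events that
are asymptotically `P_{n,0}`-null are also asymptotically `P_{n,h/√n}`-null (contiguity), so
`θ̂_n = 0` also with `P_{n,h/√n}`-probability tending to one. On that event the scaled loss at
`θ = h/√n` equals `(c'h)²`, which is arbitrary because `c ≠ 0`.
-/
open MeasureTheory ProbabilityTheory Filter Topology

/-- The k-dimensional Gaussian shift experiment: one observation `X ~ N(θ, n⁻¹ I_k)`,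
realized as the product of the laws `N(θ i, 1/n)` over the coordinates. -/
noncomputable def shiftP (k n : ℕ) (θ : Fin k → ℝ) : Measure (Fin k → ℝ) :=
  Measure.pi fun i => gaussianReal (θ i) ((n : NNReal))⁻¹

open scoped ENNReal

namespace MeasureTheory

theorem Measure.AbsolutelyContinuous.tendsto_measure_zero {α ι : Type*} [MeasurableSpace α]
    {μ ν : Measure α} [IsFiniteMeasure μ] [SigmaFinite ν] (hμν : μ ≪ ν) {l : Filter ι}
    {s : ι → Set α} (hs : Tendsto (ν ∘ s) l (𝓝 0)) : Tendsto (μ ∘ s) l (𝓝 0) := by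
  rw [← Measure.withDensity_rnDeriv_eq μ ν hμν]
  simp only [Function.comp_def, withDensity_apply']
  exact tendsto_setLIntegral_zero
    (Measure.lintegral_rnDeriv_le.trans_lt (measure_lt_top μ _)).ne hs

theorem Measure.AbsolutelyContinuous.pi {k : ℕ} {α : Fin k → Type*}
    [∀ i, MeasurableSpace (α i)] {μ ν : (i : Fin k) → Measure (α i)}
    [∀ i, SigmaFinite (μ i)] [∀ i, SigmaFinite (ν i)] (h : ∀ i, μ i ≪ ν i) :
    Measure.pi μ ≪ Measure.pi ν := by
  induction k with
  | zero => rw [Measure.pi_of_empty μ, Measure.pi_of_empty ν]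
  | succ k ih =>
    rw [← ((measurePreserving_piFinSuccAbove μ 0).symm _).map_eq,
      ← ((measurePreserving_piFinSuccAbove ν 0).symm _).map_eq]
    exact ((h 0).prod (ih fun j => h _)).map (MeasurableEquiv.measurable _)

theorem tendsto_measure_compl_iff {α ι : Type*} [MeasurableSpace α] {μ : ι → Measure α}
    [∀ i, IsProbabilityMeasure (μ i)] {s : ι → Set α} (hs : ∀ i, MeasurableSet (s i))
    {l : Filter ι} :
    Tendsto (fun i => μ i (s i)ᶜ) l (𝓝 0) ↔ Tendsto (fun i => μ i (s i)) l (𝓝 1) := by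
  have key : ∀ (t : ι → Set α) (a : ℝ≥0∞), (∀ i, MeasurableSet (t i)) →
      Tendsto (fun i => μ i (t i)) l (𝓝 a) → Tendsto (fun i => μ i (t i)ᶜ) l (𝓝 (1 - a)) := by
    intro t a ht h
    simp_rw [prob_compl_eq_one_sub (ht _)]
    exact ((ENNReal.continuous_sub_left ENNReal.one_ne_top).tendsto a).comp h
  refine ⟨fun h => ?_, fun h => by simpa using key s 1 hs h⟩
  simpa using key (fun i => (s i)ᶜ) 0 (fun i => (hs i).compl) h

end MeasureTheory

instance isProbabilityMeasure_shiftP (k n : ℕ) (θ : Fin k → ℝ) :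
    IsProbabilityMeasure (shiftP k n θ) := by
  unfold shiftP; infer_instance

theorem shiftP_eq_map {k n : ℕ} (hn : n ≠ 0) (θ : Fin k → ℝ) :
    shiftP k n θ = (shiftP k 1 (√n • θ)).map ((√n)⁻¹ • ·) := by
  have hsqrt : (√n : ℝ) ≠ 0 := by positivity
  have hgauss : ∀ i, (gaussianReal (√n * θ i) (1 : NNReal)⁻¹).map ((√n)⁻¹ * ·)
      = gaussianReal (θ i) (n : NNReal)⁻¹ := by
    intro i
    rw [gaussianReal_map_const_mul, inv_mul_cancel_left₀ hsqrt]
    congr 1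
    ext
    simp [Real.sq_sqrt (Nat.cast_nonneg n)]
  unfold shiftP
  rw [show (fun x : Fin k → ℝ => (√n)⁻¹ • x) = fun x i => (√n)⁻¹ * x i from rfl,
    Measure.pi_map_pi (fun i => by fun_prop)]
  simp only [Pi.smul_apply, smul_eq_mul, Nat.cast_one]
  exact congrArg Measure.pi (funext fun i => (hgauss i).symm)

theorem shiftP_apply {k n : ℕ} (hn : n ≠ 0) (θ : Fin k → ℝ) (s : Set (Fin k → ℝ)) :
    shiftP k n θ s = shiftP k 1 (√n • θ) (((√n)⁻¹ • ·) ⁻¹' s) := by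
  rw [shiftP_eq_map hn]
  exact (MeasurableEquiv.smul₀ ((√n : ℝ)⁻¹) (by positivity)).measurableEmbedding.map_apply _ _

theorem shiftP_one_absolutelyContinuous {k : ℕ} (h h' : Fin k → ℝ) :
    shiftP k 1 h ≪ shiftP k 1 h' :=
  Measure.AbsolutelyContinuous.pi fun i =>
    (gaussianReal_absolutelyContinuous _ (by simp)).trans
      (gaussianReal_absolutelyContinuous' _ (by simp))

theorem tendsto_shiftP_inv_sqrt_smul {k : ℕ} (h : Fin k → ℝ) {s : ℕ → Set (Fin k → ℝ)}
    (hs : Tendsto (fun n => shiftP k n 0 (s n)) atTop (𝓝 0)) :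
    Tendsto (fun n => shiftP k n ((√n)⁻¹ • h) (s n)) atTop (𝓝 0) := by
  set t : ℕ → Set (Fin k → ℝ) := fun n => ((√n : ℝ)⁻¹ • ·) ⁻¹' s n
  have h0 : ∀ᶠ n in atTop, shiftP k n 0 (s n) = shiftP k 1 0 (t n) := by
    filter_upwards [eventually_ne_atTop 0] with n hn
    rw [shiftP_apply hn, smul_zero]
  have hlocal : ∀ᶠ n in atTop, shiftP k n ((√n)⁻¹ • h) (s n) = shiftP k 1 h (t n) := by
    filter_upwards [eventually_ne_atTop 0] with n hn
    rw [shiftP_apply hn, smul_smul, mul_inv_cancel₀ (by positivity), one_smul]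
  exact (tendsto_congr' hlocal).2
    ((shiftP_one_absolutelyContinuous h 0).tendsto_measure_zero ((tendsto_congr' h0).1 hs))

theorem exists_sum_mul_eq {k : ℕ} {c : Fin k → ℝ} (hc : c ≠ 0) (a : ℝ) :
    ∃ h : Fin k → ℝ, ∑ i, c i * h i = a := by
  obtain ⟨i, hi⟩ := Function.ne_iff.mp hc
  exact ⟨Pi.single i (a / c i), by simp [Pi.single_apply, mul_div_cancel₀ _ hi]⟩

theorem ofReal_sq_mul_shiftP_le_lintegral {k n : ℕ} (hn : n ≠ 0)
    {f : (Fin k → ℝ) → Fin k → ℝ} (hf : Measurable f) (c h : Fin k → ℝ) :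
    ENNReal.ofReal ((∑ i, c i * h i) ^ 2) * shiftP k n ((√n)⁻¹ • h) {x | f x = 0} ≤
      ∫⁻ x, ENNReal.ofReal ((n : ℝ) * (∑ i, c i * (f x i - ((√n)⁻¹ • h) i)) ^ 2)
        ∂shiftP k n ((√n)⁻¹ • h) := by
  have hloss : (n : ℝ) * (∑ i, c i * (0 - ((√n)⁻¹ • h) i)) ^ 2 = (∑ i, c i * h i) ^ 2 := by
    have hsum : ∑ i, c i * (0 - ((√n)⁻¹ • h) i) = -((√n)⁻¹ * ∑ i, c i * h i) := by
      simp only [Pi.smul_apply, smul_eq_mul, zero_sub, Finset.mul_sum, ← Finset.sum_neg_distrib]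
      exact Finset.sum_congr rfl fun i _ => by ring
    have hn' : (n : ℝ) ≠ 0 := by exact_mod_cast hn
    rw [hsum, neg_sq, mul_pow, inv_pow, Real.sq_sqrt (Nat.cast_nonneg n), ← mul_assoc,
      mul_inv_cancel₀ hn', one_mul]
  have hmeas : MeasurableSet {x | f x = 0} := hf (measurableSet_singleton 0)
  rw [← lintegral_indicator_const hmeas]
  refine lintegral_mono (Set.indicator_le fun x hx => ?_)
  simp only [show f x = 0 from hx, Pi.zero_apply, hloss, le_refl]

theorem stmt_9 (k : ℕ)
    (est : (n : ℕ) → (Fin k → ℝ) → (Fin k → ℝ))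
    (hmeas : ∀ n, Measurable (est n))
    (hsparse : ∀ θ : Fin k → ℝ,
      Tendsto (fun n => shiftP k n θ {x | ∀ i, θ i = 0 → est n x i = 0}) atTop (𝓝 1))
    (c : Fin k → ℝ) (hc : c ≠ 0) :
    Tendsto (fun n : ℕ => ⨆ θ : Fin k → ℝ,
        ∫⁻ x, ENNReal.ofReal ((n : ℝ) * (∑ i, c i * (est n x i - θ i)) ^ 2)
          ∂(shiftP k n θ))
      atTop (𝓝 ⊤) := by
  have hA : ∀ n, MeasurableSet {x | est n x = 0} := fun n => hmeas n (measurableSet_singleton 0)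
  have hnull : Tendsto (fun n => shiftP k n 0 {x | est n x = 0}ᶜ) atTop (𝓝 0) :=
    (tendsto_measure_compl_iff hA).2 (by simpa [funext_iff] using hsparse 0)
  rw [ENNReal.tendsto_nhds_top_iff_nnreal]
  intro M
  obtain ⟨h, hch⟩ := exists_sum_mul_eq hc (M + 1)
  have hlocal : Tendsto (fun n => shiftP k n ((√n)⁻¹ • h) {x | est n x = 0}) atTop (𝓝 1) :=
    (tendsto_measure_compl_iff hA).1 (tendsto_shiftP_inv_sqrt_smul h hnull)
  have hM : (M : ℝ≥0∞) < ENNReal.ofReal ((∑ i, c i * h i) ^ 2) * 1 := by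
    rw [mul_one, hch, ← ENNReal.ofReal_coe_nnreal, ENNReal.ofReal_lt_ofReal_iff (by positivity)]
    nlinarith [M.coe_nonneg]
  have hrisk :=
    (ENNReal.Tendsto.const_mul hlocal (Or.inr ENNReal.ofReal_ne_top)).eventually_const_lt hM
  filter_upwards [hrisk, eventually_ne_atTop 0] with n hlt hn
  exact hlt.trans_le
    (le_iSup_of_le ((√n)⁻¹ • h) (ofReal_sq_mul_shiftP_le_lintegral hn (hmeas n) c h))
end

section
/- Let l_n : ℝ^k → [0,∞) be a sequence of nonnegative loss functions and θ̂_n an estimator in the k-dimensional Gaussian shift experiment satisfying P_{n,0}(θ̂_n = 0) → 1. Then for any 0 < ρ ≤ ∞, liminf_{n→∞} sup_{‖θ‖ < ρ/√n} E_{n,θ}[l_n(√n(θ̂_n − θ))] ≥ sup_{‖u‖ < ρ} liminf_{n→∞} l_n(u). -/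
open MeasureTheory ProbabilityTheory Filter Topology

/-!
Rescaling by `√n` turns the local alternative `θₙ = -u/√n` into the fixed Gaussian `N(-u, I)` and
`P_{n,0}` into `N(0, I)`. The two are mutually absolutely continuous, so every sequence of events
negligible under `P_{n,0}` stays negligible under `P_{n,θₙ}`. Hence `θ̂ₙ = 0`, where
`√n (θ̂ₙ - θₙ) = u`, has `P_{n,θₙ}`-probability tending to one, and the worst-case risk at stage `n`
is at least `lₙ(u) · P_{n,θₙ}(θ̂ₙ = 0)`.
-/

open scoped ENNReal NNReal

theorem MeasureTheory.Measure.AbsolutelyContinuous.pi_fin :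
    ∀ {n : ℕ} {α : Fin n → Type*} [∀ i, MeasurableSpace (α i)] {μ ν : ∀ i, Measure (α i)}
      [∀ i, SigmaFinite (μ i)] [∀ i, SigmaFinite (ν i)],
      (∀ i, μ i ≪ ν i) → Measure.pi μ ≪ Measure.pi ν
  | 0, _, _, μ, ν, _, _, _ => by rw [Measure.pi_of_empty μ, Measure.pi_of_empty ν]
  | n + 1, α, _, μ, ν, _, _, h => by
    let e := MeasurableEquiv.piFinSuccAbove α 0
    rw [← e.map_symm_map (μ := Measure.pi μ), ← e.map_symm_map (μ := Measure.pi ν),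
      (measurePreserving_piFinSuccAbove μ 0).map_eq,
      (measurePreserving_piFinSuccAbove ν 0).map_eq]
    exact ((h 0).prod (pi_fin fun i => h _)).map e.symm.measurable

theorem MeasureTheory.Measure.AbsolutelyContinuous.tendsto_measure_zero_s15 {α ι : Type*}
    [MeasurableSpace α] {μ ν : Measure α} [IsFiniteMeasure μ] [SigmaFinite ν] (h : μ ≪ ν)
    {l : Filter ι} {s : ι → Set α} (hs : Tendsto (fun i => ν (s i)) l (𝓝 0)) :
    Tendsto (fun i => μ (s i)) l (𝓝 0) := by
  simp_rw [← Measure.setLIntegral_rnDeriv h]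
  exact tendsto_setLIntegral_zero
    ((Measure.lintegral_rnDeriv_le).trans_lt (measure_lt_top μ _)).ne hs

theorem MeasureTheory.tendsto_measure_compl_zero_iff {α ι : Type*} [MeasurableSpace α]
    {μ : ι → Measure α} [∀ i, IsProbabilityMeasure (μ i)] {l : Filter ι} {s : ι → Set α}
    (hs : ∀ i, MeasurableSet (s i)) :
    Tendsto (fun i => μ i (s i)ᶜ) l (𝓝 0) ↔ Tendsto (fun i => μ i (s i)) l (𝓝 1) := by
  simp_rw [prob_compl_eq_one_sub (hs _)]
  constructor <;> intro h <;>
    simpa [ENNReal.sub_sub_cancel ENNReal.one_ne_top prob_le_one] using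
      ENNReal.Tendsto.sub tendsto_const_nhds h (Or.inl ENNReal.one_ne_top)

theorem MeasureTheory.mul_measure_le_lintegral {α : Type*} [MeasurableSpace α] {μ : Measure α}
    {s : Set α} (hs : MeasurableSet s) {c : ℝ≥0∞} {f : α → ℝ≥0∞} (hf : ∀ x ∈ s, c ≤ f x) :
    c * μ s ≤ ∫⁻ x, f x ∂μ :=
  calc c * μ s = ∫⁻ _ in s, c ∂μ := (setLIntegral_const s c).symm
    _ ≤ ∫⁻ x in s, f x ∂μ := setLIntegral_mono' hs hf
    _ ≤ ∫⁻ x, f x ∂μ := setLIntegral_le_lintegral s f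

theorem Real.sqrt_mul_sqrt_sum_sq_inv_smul {ι : Type*} [Fintype ι] {a : ℝ} (ha : 0 < a)
    (v : ι → ℝ) : √a * √(∑ i, ((√a)⁻¹ • v) i ^ 2) = √(∑ i, v i ^ 2) := by
  simp_rw [Pi.smul_apply, smul_eq_mul, mul_pow, ← Finset.mul_sum, inv_pow,
    Real.sq_sqrt ha.le, Real.sqrt_mul (inv_nonneg.2 ha.le), Real.sqrt_inv, ← mul_assoc,
    mul_inv_cancel₀ (Real.sqrt_pos.2 ha).ne', one_mul]

instance (k n : ℕ) (θ : Fin k → ℝ) : IsProbabilityMeasure (shiftP k n θ) := by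
  unfold shiftP; infer_instance

lemma shiftP_absolutelyContinuous (k : ℕ) {n : ℕ} (hn : n ≠ 0) (θ θ' : Fin k → ℝ) :
    shiftP k n θ ≪ shiftP k n θ' := by
  have hv : ((n : ℝ≥0))⁻¹ ≠ 0 := by simpa using hn
  exact Measure.AbsolutelyContinuous.pi_fin fun i =>
    (gaussianReal_absolutelyContinuous _ hv).trans (gaussianReal_absolutelyContinuous' _ hv)

lemma shiftP_eq_map_smul (k : ℕ) {n : ℕ} (hn : n ≠ 0) (θ : Fin k → ℝ) :
    shiftP k n θ = (shiftP k 1 (√n • θ)).map ((√n)⁻¹ • ·) := by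
  have hs : √(n : ℝ) ≠ 0 := by positivity
  change _ = (shiftP k 1 (√n • θ)).map (fun x i => (√n)⁻¹ * x i)
  rw [shiftP, shiftP, Measure.pi_map_pi fun i => by fun_prop]
  congr 1
  ext1 i
  rw [gaussianReal_map_const_mul]
  congr 1
  · simp [hs]
  · ext
    simp [Real.sq_sqrt]

lemma shiftP_apply_eq_shiftP_one (k : ℕ) {n : ℕ} (hn : n ≠ 0) (θ : Fin k → ℝ)
    (s : Set (Fin k → ℝ)) :
    shiftP k n θ s = shiftP k 1 (√n • θ) (((√n)⁻¹ • ·) ⁻¹' s) := by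
  rw [shiftP_eq_map_smul k hn]
  exact (MeasurableEquiv.smul₀ _ (by positivity : (√(n : ℝ))⁻¹ ≠ 0)).map_apply s

lemma tendsto_shiftP_local_of_tendsto_zero (k : ℕ) (h : Fin k → ℝ) {s : ℕ → Set (Fin k → ℝ)}
    (hs : Tendsto (fun n => shiftP k n 0 (s n)) atTop (𝓝 0)) :
    Tendsto (fun n => shiftP k n ((√n)⁻¹ • h) (s n)) atTop (𝓝 0) := by
  have hfixed : Tendsto (fun n : ℕ => shiftP k 1 h (((√n)⁻¹ • ·) ⁻¹' s n)) atTop (𝓝 0) := by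
    refine (shiftP_absolutelyContinuous k one_ne_zero h 0).tendsto_measure_zero_s15
      (hs.congr' ((eventually_ne_atTop 0).mono fun n hn => ?_))
    rw [shiftP_apply_eq_shiftP_one k hn, smul_zero]
  refine hfixed.congr' ((eventually_ne_atTop 0).mono fun n hn => ?_)
  beta_reduce
  rw [shiftP_apply_eq_shiftP_one k hn, smul_inv_smul₀ (by positivity)]

lemma tendsto_shiftP_local (k : ℕ) (h : Fin k → ℝ) {s : ℕ → Set (Fin k → ℝ)}
    (hs : ∀ n, MeasurableSet (s n)) (h1 : Tendsto (fun n => shiftP k n 0 (s n)) atTop (𝓝 1)) :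
    Tendsto (fun n => shiftP k n ((√n)⁻¹ • h) (s n)) atTop (𝓝 1) := by
  rw [← tendsto_measure_compl_zero_iff hs] at h1 ⊢
  exact tendsto_shiftP_local_of_tendsto_zero k h h1

theorem stmt_15_general (k : ℕ)
    (est : (n : ℕ) → (Fin k → ℝ) → (Fin k → ℝ))
    (hmeas : ∀ n, Measurable (est n))
    (hsparse : Tendsto (fun n => shiftP k n 0 {x | est n x = 0}) atTop (𝓝 1))
    (l : ℕ → (Fin k → ℝ) → ℝ)
    (ρ : ENNReal) :
    (⨆ u : Fin k → ℝ, ⨆ _ : ENNReal.ofReal (Real.sqrt (∑ i, u i ^ 2)) < ρ,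
        Filter.liminf (fun n : ℕ => ENNReal.ofReal (l n u)) atTop) ≤
      Filter.liminf (fun n : ℕ => ⨆ θ : Fin k → ℝ,
        ⨆ _ : ENNReal.ofReal (Real.sqrt n * Real.sqrt (∑ i, θ i ^ 2)) < ρ,
        ∫⁻ x, ENNReal.ofReal (l n (fun i => Real.sqrt n * (est n x i - θ i)))
          ∂(shiftP k n θ)) atTop := by
  refine iSup₂_le fun u hu => ?_
  have hA : ∀ n, MeasurableSet {x | est n x = 0} := fun n => hmeas n (measurableSet_singleton 0)
  have hloc := tendsto_shiftP_local k (-u) hA hsparse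
  calc liminf (fun n => ENNReal.ofReal (l n u)) atTop
      = liminf (fun n => ENNReal.ofReal (l n u)) atTop *
          liminf (fun n : ℕ => shiftP k n ((√n)⁻¹ • -u) {x | est n x = 0}) atTop := by
        rw [hloc.liminf_eq, mul_one]
    _ ≤ _ := ENNReal.le_liminf_mul
    _ ≤ _ := liminf_le_liminf ?_
  filter_upwards [eventually_ne_atTop 0] with n hn
  refine le_iSup₂_of_le ((√n)⁻¹ • -u) ?_ (mul_measure_le_lintegral (hA n) fun x hx => ?_)
  · rw [Real.sqrt_mul_sqrt_sum_sq_inv_smul (by positivity)]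
    simpa using hu
  · have hx : est n x = 0 := hx
    simp [hx, (by positivity : √(n : ℝ) ≠ 0)]

theorem stmt_15 (k : ℕ)
    (est : (n : ℕ) → (Fin k → ℝ) → (Fin k → ℝ))
    (hmeas : ∀ n, Measurable (est n))
    (hsparse : Tendsto (fun n => shiftP k n 0 {x | est n x = 0}) atTop (𝓝 1))
    (l : ℕ → (Fin k → ℝ) → ℝ) (hl : ∀ n u, 0 ≤ l n u) (hlmeas : ∀ n, Measurable (l n))
    (ρ : ENNReal) (hρ : 0 < ρ) :
    (⨆ u : Fin k → ℝ, ⨆ _ : ENNReal.ofReal (Real.sqrt (∑ i, u i ^ 2)) < ρ,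
        Filter.liminf (fun n : ℕ => ENNReal.ofReal (l n u)) atTop) ≤
      Filter.liminf (fun n : ℕ => ⨆ θ : Fin k → ℝ,
        ⨆ _ : ENNReal.ofReal (Real.sqrt n * Real.sqrt (∑ i, θ i ^ 2)) < ρ,
        ∫⁻ x, ENNReal.ofReal (l n (fun i => Real.sqrt n * (est n x i - θ i)))
          ∂(shiftP k n θ)) atTop :=
  stmt_15_general k est hmeas hsparse l ρ
end
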